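/- For every r ∈ ℝ^N_{>0} (not necessarily satisfying the triangle inequalities), the extended curvatures satisfy the discrete Gauss–Bonnet formula Σ_{i=1}^N K̃_i(r) = 2πχ(M). -/
import Mathlib


open Real Filter Topology

namespace IDCP

variable {N : ℕ}

/-- The set of edges: 2-element subsets of vertices contained in some face. -/
def edges (Fc : Finset (Finset (Fin N))) : Finset (Finset (Fin N)) :=
  Fc.biUnion fun f => f.powersetCard 2

/-- `Fc` is the face set of a triangulation of a closed connected surface:
every face has 3 vertices, every edge lies in exactly two faces, and the
1-skeleton is connected. -/
structure IsTriangulation (Fc : Finset (Finset (Fin N))) : Prop where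
  card3 : ∀ f ∈ Fc, f.card = 3
  edge2 : ∀ e ∈ edges Fc, (Fc.filter fun f => e ⊆ f).card = 2
  conn : (SimpleGraph.fromRel fun i j => ({i, j} : Finset (Fin N)) ∈ edges Fc).Connected

/-- Euler characteristic χ(M) = N − |E| + |F|. -/
def chi (Fc : Finset (Finset (Fin N))) : ℤ :=
  (N : ℤ) - ((edges Fc).card : ℤ) + (Fc.card : ℤ)

/-- Edge length l_ij = √(r_i² + r_j² + 2 r_i r_j I_{ij}). -/
noncomputable def len (I : Finset (Fin N) → ℝ) (r : Fin N → ℝ) (i j : Fin N) : ℝ :=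
  Real.sqrt (r i ^ 2 + r j ^ 2 + 2 * r i * r j * I {i, j})

/-- The cosine of the inner angle at `i` in triangle `{i,j,k}`. -/
noncomputable def cosAng (I : Finset (Fin N) → ℝ) (r : Fin N → ℝ) (i j k : Fin N) : ℝ :=
  (len I r i j ^ 2 + len I r i k ^ 2 - len I r j k ^ 2) / (2 * len I r i j * len I r i k)

/-- The auxiliary function Λ. -/
noncomputable def Lam (x : ℝ) : ℝ :=
  if x ≤ -1 then π else if x ≤ 1 then Real.arccos x else 0

/-- Discrete Gaussian curvature K_i = 2π − Σ_{{i,j,k}∈F} θ_i^{jk}.  Every face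
containing `i` appears exactly twice (once for each ordering of `j,k`), whence
the factor 1/2. -/
noncomputable def K (Fc : Finset (Finset (Fin N))) (I : Finset (Fin N) → ℝ)
    (r : Fin N → ℝ) (i : Fin N) : ℝ :=
  2 * π - (1 / 2) * ∑ j, ∑ k,
    (if ({i, j, k} : Finset (Fin N)) ∈ Fc then Real.arccos (cosAng I r i j k) else 0)

/-- Extended curvature K̃_i = 2π − Σ θ̃_i^{jk}, using the generalized angles Λ. -/
noncomputable def Kt (Fc : Finset (Finset (Fin N))) (I : Finset (Fin N) → ℝ)
    (r : Fin N → ℝ) (i : Fin N) : ℝ :=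
  2 * π - (1 / 2) * ∑ j, ∑ k,
    (if ({i, j, k} : Finset (Fin N)) ∈ Fc then Lam (cosAng I r i j k) else 0)

/-- The set Ω of inversive distance circle packing metrics. -/
def Omega (Fc : Finset (Finset (Fin N))) (I : Finset (Fin N) → ℝ) : Set (Fin N → ℝ) :=
  {r | (∀ i, 0 < r i) ∧ ∀ i j k : Fin N, ({i, j, k} : Finset (Fin N)) ∈ Fc →
    len I r j k < len I r i j + len I r i k}

/-- s_α = 2πχ(M)/‖r‖_α^α. -/
noncomputable def sA (Fc : Finset (Finset (Fin N))) (α : ℝ) (r : Fin N → ℝ) : ℝ :=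
  2 * π * (chi Fc : ℝ) / ∑ j, r j ^ α

/-- Back from u-coordinates: r_i = e^{u_i}. -/
noncomputable def rOf (u : Fin N → ℝ) : Fin N → ℝ := fun i => Real.exp (u i)

/-- ln Ω, the image of Ω under the coordinate change r ↦ u, u_i = ln r_i. -/
def lnOmega (Fc : Finset (Finset (Fin N))) (I : Finset (Fin N) → ℝ) : Set (Fin N → ℝ) :=
  {u | rOf u ∈ Omega Fc I}

/-- `u` solves the α-flow du_i/dt = s_α r_i^α − K_i on the time set `D`,
staying in ln Ω. -/
def IsFlowSol (Fc : Finset (Finset (Fin N))) (I : Finset (Fin N) → ℝ) (α : ℝ)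
    (D : Set ℝ) (u : ℝ → Fin N → ℝ) : Prop :=
  ∀ t ∈ D, rOf (u t) ∈ Omega Fc I ∧
    ∀ i, HasDerivWithinAt (fun s => u s i)
      (sA Fc α (rOf (u t)) * rOf (u t) i ^ α - K Fc I (rOf (u t)) i) D t

/-- `u` solves the extended α-flow du_i/dt = s_α r_i^α − K̃_i on the time set `D`. -/
def IsExtFlowSol (Fc : Finset (Finset (Fin N))) (I : Finset (Fin N) → ℝ) (α : ℝ)
    (D : Set ℝ) (u : ℝ → Fin N → ℝ) : Prop :=
  ∀ t ∈ D, ∀ i, HasDerivWithinAt (fun s => u s i)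
      (sA Fc α (rOf (u t)) * rOf (u t) i ^ α - Kt Fc I (rOf (u t)) i) D t

/-- Lk(A): pairs (e,v) with both endpoints of e outside A, v ∈ A, and e,v spanning a face. -/
def Lk (Fc : Finset (Finset (Fin N))) (A : Finset (Fin N)) :
    Finset (Finset (Fin N) × Fin N) :=
  ((edges Fc) ×ˢ (Finset.univ : Finset (Fin N))).filter fun p =>
    (∀ x ∈ p.1, x ∉ A) ∧ p.2 ∈ A ∧ insert p.2 p.1 ∈ Fc

/-- Euler characteristic χ(F_A) of the subcomplex spanned by A. -/
def chiSub (Fc : Finset (Finset (Fin N))) (A : Finset (Fin N)) : ℤ :=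
  (A.card : ℤ) - (((edges Fc).filter (fun e => e ⊆ A)).card : ℤ)
    + ((Fc.filter (fun f => f ⊆ A)).card : ℤ)

/-- The lower bound −Σ_{(e,v)∈Lk(A)}(π − Λ(I_e)) + 2πχ(F_A) defining Y_A. -/
noncomputable def Ybound (Fc : Finset (Finset (Fin N))) (I : Finset (Fin N) → ℝ)
    (A : Finset (Fin N)) : ℝ :=
  -(∑ p ∈ Lk Fc A, (π - Lam (I p.1))) + 2 * π * (chiSub Fc A : ℝ)

/-- x ∈ Y. -/
noncomputable def memY (Fc : Finset (Finset (Fin N))) (I : Finset (Fin N) → ℝ)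
    (x : Fin N → ℝ) : Prop :=
  (∑ i, x i) = 2 * π * (chi Fc : ℝ) ∧
    ∀ A : Finset (Fin N), A.Nonempty → A ≠ Finset.univ → Ybound Fc I A < ∑ i ∈ A, x i

/-- x ∈ Ȳ. -/
noncomputable def memYbar (Fc : Finset (Finset (Fin N))) (I : Finset (Fin N) → ℝ)
    (x : Fin N → ℝ) : Prop :=
  (∑ i, x i) = 2 * π * (chi Fc : ℝ) ∧
    ∀ A : Finset (Fin N), A.Nonempty → A ≠ Finset.univ → Ybound Fc I A ≤ ∑ i ∈ A, x i

lemma lam_of_le {x : ℝ} (h : x ≤ -1) : Lam x = π := by rw [Lam, if_pos h]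

lemma lam_of_ge {x : ℝ} (h : 1 ≤ x) : Lam x = 0 := by
  rw [Lam, if_neg (by intro h'; nlinarith [Real.pi_pos])]
  split_ifs with h2
  · have : x = 1 := le_antisymm h2 h
    simp [this]
  · rfl

lemma arccos_sum {a b c : ℝ} (ha : 0 < a) (hb : 0 < b) (hc : 0 < c)
    (h1 : a < b + c) (h2 : b < a + c) (h3 : c < a + b) :
    Real.arccos ((c^2 + b^2 - a^2) / (2 * c * b)) +
      Real.arccos ((c^2 + a^2 - b^2) / (2 * c * a)) +
      Real.arccos ((b^2 + a^2 - c^2) / (2 * b * a)) = π := by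
  have ha' : a ≠ 0 := ha.ne'
  have hb' : b ≠ 0 := hb.ne'
  have hc' : c ≠ 0 := hc.ne'
  set x := (c^2 + b^2 - a^2) / (2 * c * b) with hxdef
  set y := (c^2 + a^2 - b^2) / (2 * c * a) with hydef
  set z := (b^2 + a^2 - c^2) / (2 * b * a) with hzdef
  set Q := (a + b + c) * (b + c - a) * (a + c - b) * (a + b - c) with hQdef
  have hQ : 0 < Q := by
    apply mul_pos (mul_pos (mul_pos (by linarith) (by linarith)) (by linarith)) (by linarith)
  have hy1 : -1 ≤ y := by
    rw [hydef, le_div_iff₀ (by positivity)]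
    nlinarith [sq_nonneg (a + c - b)]
  have hy2 : y ≤ 1 := by
    rw [hydef, div_le_one (by positivity)]
    nlinarith [sq_nonneg (a - c + b), mul_pos hb (show 0 < a + c - b by linarith)]
  have hz1 : -1 ≤ z := by
    rw [hzdef, le_div_iff₀ (by positivity)]
    nlinarith [sq_nonneg (a + b - c)]
  have hz2 : z ≤ 1 := by
    rw [hzdef, div_le_one (by positivity)]
    nlinarith [sq_nonneg (a - b + c), mul_pos hc (show 0 < a + b - c by linarith)]
  have hsy : Real.sin (Real.arccos y) = Real.sqrt Q / (2 * c * a) := by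
    rw [Real.sin_arccos]
    have : 1 - y ^ 2 = Q / (2 * c * a) ^ 2 := by
      rw [hydef, hQdef]; field_simp; ring
    rw [this, Real.sqrt_div hQ.le, Real.sqrt_sq (by positivity)]
  have hsz : Real.sin (Real.arccos z) = Real.sqrt Q / (2 * b * a) := by
    rw [Real.sin_arccos]
    have : 1 - z ^ 2 = Q / (2 * b * a) ^ 2 := by
      rw [hzdef, hQdef]; field_simp; ring
    rw [this, Real.sqrt_div hQ.le, Real.sqrt_sq (by positivity)]
  set s := Real.arccos y + Real.arccos z with hsdef
  have hsin : Real.sin s = Real.sqrt Q / (2 * b * c) := by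
    rw [hsdef, Real.sin_add, hsy, hsz, Real.cos_arccos hy1 hy2, Real.cos_arccos hz1 hz2,
      hydef, hzdef]
    field_simp
    ring
  have hsinpos : 0 < Real.sin s := by
    rw [hsin]; positivity
  have hcos : Real.cos s = -x := by
    rw [hsdef, Real.cos_add, hsy, hsz, Real.cos_arccos hy1 hy2, Real.cos_arccos hz1 hz2]
    rw [show Real.sqrt Q / (2*c*a) * (Real.sqrt Q / (2*b*a)) = Q / (2*c*a*(2*b*a)) by
      rw [div_mul_div_comm, Real.mul_self_sqrt hQ.le], hxdef, hydef, hzdef, hQdef]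
    field_simp
    ring
  have hs0 : 0 ≤ s := add_nonneg (Real.arccos_nonneg _) (Real.arccos_nonneg _)
  have hs2 : s ≤ 2 * π := by
    have := Real.arccos_le_pi y; have := Real.arccos_le_pi z; rw [hsdef]; linarith
  have hsπ : s ≤ π := by
    by_contra h
    push_neg at h
    have h0 : 0 ≤ Real.sin (s - π) :=
      Real.sin_nonneg_of_nonneg_of_le_pi (by linarith) (by linarith)
    rw [Real.sin_sub_pi] at h0
    linarith
  have hx : x = Real.cos (π - s) := by rw [Real.cos_pi_sub, hcos]; ring
  rw [hx, Real.arccos_cos (by linarith) (by linarith)]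
  ring

lemma lam_sum {a b c : ℝ} (ha : 0 < a) (hb : 0 < b) (hc : 0 < c) :
    Lam ((c^2 + b^2 - a^2) / (2 * c * b)) +
      Lam ((c^2 + a^2 - b^2) / (2 * c * a)) +
      Lam ((b^2 + a^2 - c^2) / (2 * b * a)) = π := by
  rcases le_or_gt (b + c) a with h | h1
  · rw [lam_of_le (by rw [div_le_iff₀ (by positivity)]; nlinarith),
      lam_of_ge (by rw [le_div_iff₀ (by positivity)]; nlinarith),
      lam_of_ge (by rw [le_div_iff₀ (by positivity)]; nlinarith)]
    ring
  rcases le_or_gt (a + c) b with h | h2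
  · rw [lam_of_ge (by rw [le_div_iff₀ (by positivity)]; nlinarith),
      lam_of_le (by rw [div_le_iff₀ (by positivity)]; nlinarith),
      lam_of_ge (by rw [le_div_iff₀ (by positivity)]; nlinarith)]
    ring
  rcases le_or_gt (a + b) c with h | h3
  · rw [lam_of_ge (by rw [le_div_iff₀ (by positivity)]; nlinarith),
      lam_of_ge (by rw [le_div_iff₀ (by positivity)]; nlinarith),
      lam_of_le (by rw [div_le_iff₀ (by positivity)]; nlinarith)]
    ring
  · have hx1 : (-1:ℝ) < (c^2 + b^2 - a^2) / (2 * c * b) := by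
      rw [lt_div_iff₀ (by positivity)]
      nlinarith [mul_pos (show (0:ℝ) < b + c - a by linarith) (show (0:ℝ) < a + b + c by linarith)]
    have hx2 : (c^2 + b^2 - a^2) / (2 * c * b) < 1 := by
      rw [div_lt_one (by positivity)]
      nlinarith [mul_pos (show (0:ℝ) < a + b - c by linarith) (show (0:ℝ) < a + c - b by linarith)]
    have hy1 : (-1:ℝ) < (c^2 + a^2 - b^2) / (2 * c * a) := by
      rw [lt_div_iff₀ (by positivity)]
      nlinarith [mul_pos (show (0:ℝ) < a + c - b by linarith) (show (0:ℝ) < a + b + c by linarith)]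
    have hy2 : (c^2 + a^2 - b^2) / (2 * c * a) < 1 := by
      rw [div_lt_one (by positivity)]
      nlinarith [mul_pos (show (0:ℝ) < a + b - c by linarith) (show (0:ℝ) < b + c - a by linarith)]
    have hz1 : (-1:ℝ) < (b^2 + a^2 - c^2) / (2 * b * a) := by
      rw [lt_div_iff₀ (by positivity)]
      nlinarith [mul_pos (show (0:ℝ) < a + b - c by linarith) (show (0:ℝ) < a + b + c by linarith)]
    have hz2 : (b^2 + a^2 - c^2) / (2 * b * a) < 1 := by
      rw [div_lt_one (by positivity)]
      nlinarith [mul_pos (show (0:ℝ) < a + c - b by linarith) (show (0:ℝ) < b + c - a by linarith)]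
    rw [Lam, if_neg (not_le.2 hx1), if_pos hx2.le,
      Lam, if_neg (not_le.2 hy1), if_pos hy2.le,
      Lam, if_neg (not_le.2 hz1), if_pos hz2.le]
    exact arccos_sum ha hb hc h1 h2 h3

lemma len_comm (I : Finset (Fin N) → ℝ) (r : Fin N → ℝ) (i j : Fin N) :
    len I r i j = len I r j i := by
  rw [len, len]
  congr 1
  rw [Finset.pair_comm j i]
  ring

lemma len_pos {I : Finset (Fin N) → ℝ} {r : Fin N → ℝ} {i j : Fin N}
    (hi : 0 < r i) (hj : 0 < r j) (hIij : 0 ≤ I {i, j}) : 0 < len I r i j := by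
  rw [len]
  apply Real.sqrt_pos.2
  nlinarith [mul_pos hi hj, mul_nonneg (mul_pos hi hj).le hIij, pow_pos hi 2, pow_pos hj 2]

lemma pair_mem_edges {Fc : Finset (Finset (Fin N))} {f : Finset (Fin N)} (hf : f ∈ Fc)
    {x y : Fin N} (hxy : x ≠ y) (hx : x ∈ f) (hy : y ∈ f) :
    ({x, y} : Finset (Fin N)) ∈ edges Fc := by
  refine Finset.mem_biUnion.2 ⟨f, hf, Finset.mem_powersetCard.2 ⟨?_, Finset.card_pair hxy⟩⟩
  intro z hz
  rcases Finset.mem_insert.1 hz with rfl | hz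
  · exact hx
  · rwa [Finset.mem_singleton.1 hz]

lemma key_ite (g : Fin N → Fin N → Fin N → ℝ) {p q s : Fin N}
    (hpq : p ≠ q) (hps : p ≠ s) (hqs : q ≠ s) (i j k : Fin N) :
    (if ({i, j, k} : Finset (Fin N)) = {p, q, s} then g i j k else 0) =
      (if k = s then if j = q then if i = p then g i j k else 0 else 0 else 0) +
      (if k = q then if j = s then if i = p then g i j k else 0 else 0 else 0) +
      (if k = s then if j = p then if i = q then g i j k else 0 else 0 else 0) +
      (if k = p then if j = s then if i = q then g i j k else 0 else 0 else 0) +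
      (if k = q then if j = p then if i = s then g i j k else 0 else 0 else 0) +
      (if k = p then if j = q then if i = s then g i j k else 0 else 0 else 0) := by
  have hqp := hpq.symm; have hsp := hps.symm; have hsq := hqs.symm
  by_cases h : ({i, j, k} : Finset (Fin N)) = {p, q, s}
  · rw [if_pos h]
    have hi : i = p ∨ i = q ∨ i = s := by
      have : i ∈ ({p, q, s} : Finset (Fin N)) := h ▸ (by simp)
      simpa using this
    have hj : j = p ∨ j = q ∨ j = s := by
      have : j ∈ ({p, q, s} : Finset (Fin N)) := h ▸ (by simp)
      simpa using this
    have hk : k = p ∨ k = q ∨ k = s := by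
      have : k ∈ ({p, q, s} : Finset (Fin N)) := h ▸ (by simp)
      simpa using this
    have hp : p = i ∨ p = j ∨ p = k := by
      have : p ∈ ({i, j, k} : Finset (Fin N)) := h.symm ▸ (by simp)
      simpa using this
    have hq : q = i ∨ q = j ∨ q = k := by
      have : q ∈ ({i, j, k} : Finset (Fin N)) := h.symm ▸ (by simp)
      simpa using this
    have hs : s = i ∨ s = j ∨ s = k := by
      have : s ∈ ({i, j, k} : Finset (Fin N)) := h.symm ▸ (by simp)
      simpa using this
    clear h
    rcases hi with rfl | rfl | rfl <;> rcases hj with rfl | rfl | rfl <;>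
      rcases hk with rfl | rfl | rfl <;> simp_all
  · rw [if_neg h]
    have z : ∀ p' q' s' : Fin N, ({i, j, k} : Finset (Fin N)) ≠ {p', q', s'} →
        (if k = s' then if j = q' then if i = p' then g i j k else 0 else 0 else 0) = 0 := by
      intro p' q' s' hne
      split_ifs with h1 h2 h3
      · exact absurd (by subst h1; subst h2; subst h3; rfl) hne
      all_goals rfl
    have e2 : ({p, s, q} : Finset (Fin N)) = {p, q, s} := by ext x; simp; tauto
    have e3 : ({q, p, s} : Finset (Fin N)) = {p, q, s} := by ext x; simp; tauto
    have e4 : ({q, s, p} : Finset (Fin N)) = {p, q, s} := by ext x; simp; tauto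
    have e5 : ({s, p, q} : Finset (Fin N)) = {p, q, s} := by ext x; simp; tauto
    have e6 : ({s, q, p} : Finset (Fin N)) = {p, q, s} := by ext x; simp; tauto
    rw [z p q s h, z p s q (by rw [e2]; exact h), z q p s (by rw [e3]; exact h),
      z q s p (by rw [e4]; exact h), z s p q (by rw [e5]; exact h),
      z s q p (by rw [e6]; exact h)]
    norm_num

lemma handshake {Fc : Finset (Finset (Fin N))} (hT : IsTriangulation Fc) :
    2 * (edges Fc).card = 3 * Fc.card := by
  classical
  have h3 : ∑ e ∈ edges Fc, (Fc.filter fun f => e ⊆ f).card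
      = ∑ f ∈ Fc, ((edges Fc).filter fun e => e ⊆ f).card := by
    simp only [Finset.card_filter]
    rw [Finset.sum_comm]
  have h1 : ∑ e ∈ edges Fc, (Fc.filter fun f => e ⊆ f).card = 2 * (edges Fc).card := by
    rw [Finset.sum_congr rfl fun e he => hT.edge2 e he, Finset.sum_const, smul_eq_mul, mul_comm]
  have h2 : ∑ f ∈ Fc, ((edges Fc).filter fun e => e ⊆ f).card = 3 * Fc.card := by
    have step : ∀ f ∈ Fc, ((edges Fc).filter fun e => e ⊆ f).card = 3 := by
      intro f hf
      have heq : (edges Fc).filter (fun e => e ⊆ f) = f.powersetCard 2 := by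
        ext e
        simp only [Finset.mem_filter, edges, Finset.mem_biUnion, Finset.mem_powersetCard]
        constructor
        · rintro ⟨⟨g, _, _, hcard⟩, hef⟩
          exact ⟨hef, hcard⟩
        · rintro ⟨hef, hcard⟩
          exact ⟨⟨f, hf, hef, hcard⟩, hef⟩
      rw [heq, Finset.card_powersetCard, hT.card3 f hf]
      decide
    rw [Finset.sum_congr rfl step, Finset.sum_const, smul_eq_mul, mul_comm]
  rw [← h1, h3, h2]

/-- discrete Gauss–Bonnet for the extended curvature: for every
r ∈ ℝ^N_{>0}, Σ_i K̃_i(r) = 2πχ(M). -/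
theorem stmt7 {N : ℕ} (Fc : Finset (Finset (Fin N))) (hT : IsTriangulation Fc)
    (I : Finset (Fin N) → ℝ) (hI : ∀ e ∈ edges Fc, 0 ≤ I e)
    (r : Fin N → ℝ) (hr : ∀ i, 0 < r i) :
    (∑ i, Kt Fc I r i) = 2 * π * (chi Fc : ℝ) := by
  classical
  have hface : ∀ f ∈ Fc,
      (∑ i, ∑ j, ∑ k, if ({i, j, k} : Finset (Fin N)) = f then Lam (cosAng I r i j k) else 0)
        = 2 * π := by
    intro f hf
    obtain ⟨p, q, s, hpq, hps, hqs, rfl⟩ := Finset.card_eq_three.1 (hT.card3 f hf)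
    have e1 : ({p, q} : Finset (Fin N)) ∈ edges Fc :=
      pair_mem_edges hf hpq (by simp) (by simp)
    have e2 : ({p, s} : Finset (Fin N)) ∈ edges Fc :=
      pair_mem_edges hf hps (by simp) (by simp)
    have e3 : ({q, s} : Finset (Fin N)) ∈ edges Fc :=
      pair_mem_edges hf hqs (by simp) (by simp)
    have l1 : 0 < len I r p q := len_pos (hr p) (hr q) (hI _ e1)
    have l2 : 0 < len I r p s := len_pos (hr p) (hr s) (hI _ e2)
    have l3 : 0 < len I r q s := len_pos (hr q) (hr s) (hI _ e3)
    rw [Finset.sum_congr rfl fun i _ => Finset.sum_congr rfl fun j _ =>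
      Finset.sum_congr rfl fun k _ =>
        key_ite (fun i j k => Lam (cosAng I r i j k)) hpq hps hqs i j k]
    simp only [Finset.sum_add_distrib, Finset.sum_ite_eq', Finset.mem_univ, if_true]
    have hB : cosAng I r q p s =
        (len I r p q ^ 2 + len I r q s ^ 2 - len I r p s ^ 2)
          / (2 * len I r p q * len I r q s) := by
      rw [cosAng, len_comm I r q p]
    have hC : cosAng I r s p q =
        (len I r p s ^ 2 + len I r q s ^ 2 - len I r p q ^ 2)
          / (2 * len I r p s * len I r q s) := by
      rw [cosAng, len_comm I r s p, len_comm I r s q]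
    have hBs : cosAng I r q s p = cosAng I r q p s := by
      rw [cosAng, cosAng, len_comm I r s p]
      ring
    have hAs : cosAng I r p s q = cosAng I r p q s := by
      rw [cosAng, cosAng, len_comm I r q s]
      ring
    have hCs : cosAng I r s q p = cosAng I r s p q := by
      rw [cosAng, cosAng, len_comm I r q p]
      ring
    have hA : cosAng I r p q s =
        (len I r p q ^ 2 + len I r p s ^ 2 - len I r q s ^ 2)
          / (2 * len I r p q * len I r p s) := rfl
    have hsum := lam_sum l3 l2 l1
    rw [← hA, ← hB, ← hC] at hsum
    rw [hAs, hBs, hCs]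
    linarith [hsum]
  have hstep : (∑ i, ∑ j, ∑ k,
      if ({i, j, k} : Finset (Fin N)) ∈ Fc then Lam (cosAng I r i j k) else 0)
        = 2 * π * Fc.card := by
    have h1 : ∀ i j k : Fin N,
        (if ({i, j, k} : Finset (Fin N)) ∈ Fc then Lam (cosAng I r i j k) else 0)
          = ∑ f ∈ Fc, if ({i, j, k} : Finset (Fin N)) = f then Lam (cosAng I r i j k) else 0 := by
      intro i j k
      rw [Finset.sum_ite_eq]
    calc (∑ i, ∑ j, ∑ k,
          if ({i, j, k} : Finset (Fin N)) ∈ Fc then Lam (cosAng I r i j k) else 0)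
        = ∑ i, ∑ j, ∑ k, ∑ f ∈ Fc,
            if ({i, j, k} : Finset (Fin N)) = f then Lam (cosAng I r i j k) else 0 := by
          simp only [h1]
      _ = ∑ i, ∑ j, ∑ f ∈ Fc, ∑ k : Fin N,
            if ({i, j, k} : Finset (Fin N)) = f then Lam (cosAng I r i j k) else 0 :=
          Finset.sum_congr rfl fun i _ => Finset.sum_congr rfl fun j _ => Finset.sum_comm
      _ = ∑ i, ∑ f ∈ Fc, ∑ j, ∑ k : Fin N,
            if ({i, j, k} : Finset (Fin N)) = f then Lam (cosAng I r i j k) else 0 :=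
          Finset.sum_congr rfl fun i _ => Finset.sum_comm
      _ = ∑ f ∈ Fc, ∑ i, ∑ j, ∑ k : Fin N,
            if ({i, j, k} : Finset (Fin N)) = f then Lam (cosAng I r i j k) else 0 :=
          Finset.sum_comm
      _ = ∑ _f ∈ Fc, 2 * π := Finset.sum_congr rfl hface
      _ = 2 * π * Fc.card := by rw [Finset.sum_const, nsmul_eq_mul]; ring
  have hE : 2 * ((edges Fc).card : ℝ) = 3 * (Fc.card : ℝ) := by
    exact_mod_cast congrArg (Nat.cast : ℕ → ℝ) (handshake hT)
  simp only [Kt]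
  rw [Finset.sum_sub_distrib, Finset.sum_const, Finset.card_univ, Fintype.card_fin,
    ← Finset.mul_sum, hstep, chi, nsmul_eq_mul]
  push_cast
  linear_combination π * hE

end IDCP
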